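/- Let p_w be a canonical class and s_i = (i,i+1) a simple transposition. (1) If ℓ(w s_i) > ℓ(w) then p_w(v) = p_w(v s_i) for every v ∈ S_n. (2) If ℓ(s_i w) > ℓ(w) then s_i(p_w(v)) = p_w(s_i v) for every v ∈ S_n. -/

import Mathlib

open MvPolynomial Equiv Finset

noncomputable section

/-- The polynomial ring ℂ[t₁,…,tₙ]. -/
abbrev Pol (n : ℕ) : Type := MvPolynomial (Fin n) ℂ

/-- The action of a permutation `w` on polynomials by the substitution `tᵢ ↦ t_{w(i)}`. -/
def pact {n : ℕ} (w : Perm (Fin n)) (f : Pol n) : Pol n := rename ⇑w f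

/-- The GKM condition defining `R ⊆ ∏_{v ∈ Sₙ} ℂ[t₁,…,tₙ]`: for every `v` and every
transposition `(i j)` with `i < j`, the difference `p(v) − p((i j)v)` is divisible by
`tᵢ − tⱼ`. -/
def GKM (n : ℕ) (p : Perm (Fin n) → Pol n) : Prop :=
  ∀ (v : Perm (Fin n)) (i j : Fin n), i < j →
    (X i - X j : Pol n) ∣ (p v - p (Equiv.swap i j * v))

/-- The length of a permutation: its number of inversions. -/
def len {n : ℕ} (w : Perm (Fin n)) : ℕ :=
  (Finset.univ.filter fun q : Fin n × Fin n => q.1 < q.2 ∧ w q.2 < w q.1).card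

/-- Bruhat order: the partial order generated by `u < (i j) u` whenever `ℓ(u) < ℓ((i j)u)`. -/
def bruhatLE {n : ℕ} : Perm (Fin n) → Perm (Fin n) → Prop :=
  Relation.ReflTransGen
    (fun u v => (∃ i j : Fin n, i < j ∧ v = Equiv.swap i j * u) ∧ len u < len v)

/-- `p` is the canonical class (equivariant Schubert class) of `w`:
(i) each component is homogeneous of degree `ℓ(w)`; (ii) `p(v) = 0` unless `v ≥ w` in
Bruhat order; (iii) `p(w) = ∏ (tᵢ − tⱼ)` over pairs `i < j` with `ℓ((i j)w) < ℓ(w)`;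
and `p` satisfies the GKM conditions. -/
def IsCanonical {n : ℕ} (w : Perm (Fin n)) (p : Perm (Fin n) → Pol n) : Prop :=
  GKM n p ∧
  (∀ v, (p v).IsHomogeneous (len w)) ∧
  (∀ v, ¬ bruhatLE w v → p v = 0) ∧
  p w = ∏ q ∈ Finset.univ.filter
      (fun q : Fin n × Fin n => q.1 < q.2 ∧ len (Equiv.swap q.1 q.2 * w) < len w),
      (X q.1 - X q.2 : Pol n)

/-- The simple transposition `sᵢ = (i, i+1)`. -/
def sT (n i : ℕ) (h : i + 1 < n) : Perm (Fin n) :=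
  Equiv.swap ⟨i, Nat.lt_of_succ_lt h⟩ ⟨i + 1, h⟩

/-- The dot (left) action: `(w·p)(v) = w(p(w⁻¹ v))`. -/
def dot {n : ℕ} (w : Perm (Fin n)) (p : Perm (Fin n) → Pol n) : Perm (Fin n) → Pol n :=
  fun v => pact w (p (w⁻¹ * v))

/-- The star (right) action: `(p * w)(v) = p(vw)`. -/
def starAct {n : ℕ} (p : Perm (Fin n) → Pol n) (w : Perm (Fin n)) :
    Perm (Fin n) → Pol n :=
  fun v => p (v * w)

/-- `R` as a `ℂ[t₁,…,tₙ]`-submodule of the product. -/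
def gkmSubmodule (n : ℕ) : Submodule (Pol n) (Perm (Fin n) → Pol n) where
  carrier := {p | GKM n p}
  add_mem' := by
    intro a b ha hb v i j hij
    have h := dvd_add (ha v i j hij) (hb v i j hij)
    simpa [Pi.add_apply, add_sub_add_comm] using h
  zero_mem' := by
    intro v i j hij
    simp
  smul_mem' := by
    intro c p hp v i j hij
    have h := (hp v i j hij).mul_left c
    simpa [Pi.smul_apply, smul_eq_mul, mul_sub] using h

/-- The maximal ideal `𝔪 = (t₁,…,tₙ) ⊆ ℂ[t₁,…,tₙ]`. -/
def mIdeal (n : ℕ) : Ideal (Pol n) := Ideal.span (Set.range (X : Fin n → Pol n))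

/-- The submodule `𝔪R`: finite sums of products `c • p` with `c ∈ 𝔪` and `p ∈ R`. -/
def mR (n : ℕ) : Submodule (Pol n) (Perm (Fin n) → Pol n) :=
  Submodule.span (Pol n) {q | ∃ c ∈ mIdeal n, ∃ p, GKM n p ∧ q = c • p}

/-! The difference `r = p_w − p_w·sᵢ` (resp. `r = p_w − sᵢ·p_w`) is again a GKM class,
homogeneous of degree `ℓ(w)`, anti-invariant under `sᵢ`, and it vanishes at every `v` with
`ℓ(v) < ℓ(w)`: there `p_w(v) = 0`, and `p_w(v sᵢ) = 0` because `ℓ(v sᵢ) ≤ ℓ(w)` while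
`v sᵢ ≠ w` by the length hypothesis. At a shortest `v` with `r(v) ≠ 0`, `r(v)` is divisible by
`t_a − t_b` for each of the `ℓ(v)` inversions `(a, b)` of `v⁻¹`, because `(a b) v` is shorter.
If `v sᵢ` is shorter than `v`, anti-invariance gives `r(v) = −r(v sᵢ) = 0`; otherwise
anti-invariance and GKM make `r(v)` divisible by one further linear form, so that
`ℓ(v) + 1 ≤ ℓ(w)` by degrees, and `r(v) = 0` after all. -/

section Length

variable {n : ℕ}

def inversions (v : Perm (Fin n)) : Finset (Fin n × Fin n) :=
  univ.filter fun q : Fin n × Fin n => q.1 < q.2 ∧ v q.2 < v q.1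

theorem len_eq_card_inversions (v : Perm (Fin n)) : len v = (inversions v).card := rfl

theorem mem_inversions {v : Perm (Fin n)} {e : Fin n × Fin n} :
    e ∈ inversions v ↔ e.1 < e.2 ∧ v e.2 < v e.1 := by
  simp [inversions]

theorem lt_of_lt_of_swap_gt {v : Perm (Fin n)} {p q x y : Fin n} (hpq : p < q)
    (hv : v q < v p) (hxy : x < y) (hτ : swap p q y < swap p q x)
    (hvτ : v (swap p q y) < v (swap p q x)) : v y < v x := by
  rw [swap_apply_def, swap_apply_def] at hτ hvτ
  split_ifs at hτ hvτ <;> subst_vars <;> omega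

/- `e ↦ (τ e.1, τ e.2)`, except on the pairs whose order `τ` reverses (which are kept), embeds
the inversions of `v τ` into those of `v` other than `(p, q)`. -/
theorem len_mul_swap_lt {v : Perm (Fin n)} {p q : Fin n} (hpq : p < q) (hv : v q < v p) :
    len (v * swap p q) < len v := by
  set τ := swap p q
  let ψ : Fin n × Fin n → Fin n × Fin n := fun e => if τ e.1 < τ e.2 then (τ e.1, τ e.2) else e
  have hpq_mem : (p, q) ∈ inversions v := mem_inversions.2 ⟨hpq, hv⟩
  rw [len_eq_card_inversions, len_eq_card_inversions]
  refine lt_of_le_of_lt ?_ (Finset.card_erase_lt_of_mem hpq_mem)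
  refine Finset.card_le_card_of_injOn ψ (fun e he => ?_) (fun e he e' he' h => ?_)
  · obtain ⟨hlt, hvlt⟩ := mem_inversions.1 he
    simp only [Perm.mul_apply] at hvlt
    rw [Finset.mem_coe, Finset.mem_erase, mem_inversions]
    by_cases h : τ e.1 < τ e.2
    · simp only [ψ, if_pos h, ne_eq, Prod.mk.injEq]
      refine ⟨fun ⟨h1, h2⟩ => ?_, h, hvlt⟩
      rw [swap_apply_eq_iff, swap_apply_left] at h1
      rw [swap_apply_eq_iff, swap_apply_right] at h2
      exact absurd (h1 ▸ h2 ▸ hlt) (not_lt.2 hpq.le)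
    · simp only [ψ, if_neg h]
      refine ⟨fun he => ?_, hlt, lt_of_lt_of_swap_gt hpq hv hlt ?_ hvlt⟩
      · subst he
        simp only [τ, swap_apply_left, swap_apply_right] at hvlt
        exact absurd hv (not_lt.2 hvlt.le)
      · exact lt_of_le_of_ne (not_lt.1 h) fun h' => hlt.ne (τ.injective h'.symm)
  · have hlt := (mem_inversions.1 he).1
    have hlt' := (mem_inversions.1 he').1
    by_cases h1 : τ e.1 < τ e.2 <;> by_cases h2 : τ e'.1 < τ e'.2 <;>
      simp only [ψ, h1, h2, if_true, if_false, Prod.mk.injEq] at h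
    · exact Prod.ext (τ.injective h.1) (τ.injective h.2)
    · subst h
      simp only [swap_apply_self, τ] at h2
      exact absurd hlt h2
    · subst h
      simp only [swap_apply_self, τ] at h1
      exact absurd hlt' h1
    · exact h

theorem swap_apply_lt_swap_apply_of_adjacent {p q x y : Fin n} (hpq : (p : ℕ) + 1 = q)
    (hxy : x < y) (hne : (x, y) ≠ (p, q)) : swap p q x < swap p q y := by
  rw [Ne, Prod.mk.injEq] at hne
  rw [swap_apply_def, swap_apply_def]
  split_ifs <;> subst_vars <;> omega

theorem len_mul_swap_le_of_adjacent (v : Perm (Fin n)) {p q : Fin n} (hpq : (p : ℕ) + 1 = q) :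
    len (v * swap p q) ≤ len v + 1 := by
  classical
  set τ := swap p q
  have hsub : inversions (v * τ) ⊆ insert (p, q) ((inversions v).image (Prod.map τ τ)) := by
    intro e he
    obtain ⟨hlt, hvlt⟩ := mem_inversions.1 he
    rw [Finset.mem_insert, or_iff_not_imp_left]
    intro hne
    refine Finset.mem_image.2 ⟨Prod.map τ τ e, mem_inversions.2 ⟨?_, hvlt⟩,
      Prod.ext (swap_apply_self _ _ _) (swap_apply_self _ _ _)⟩
    exact swap_apply_lt_swap_apply_of_adjacent hpq hlt hne
  calc len (v * τ) ≤ (insert (p, q) ((inversions v).image (Prod.map τ τ))).card :=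
        Finset.card_le_card hsub
    _ ≤ len v + 1 := (Finset.card_insert_le _ _).trans (by gcongr; exact Finset.card_image_le)

theorem len_inv (v : Perm (Fin n)) : len v⁻¹ = len v := by
  rw [len_eq_card_inversions, len_eq_card_inversions]
  refine Finset.card_bij (fun e _ => (v⁻¹ e.2, v⁻¹ e.1)) (fun e he => ?_) (fun e _ e' _ h => ?_)
    (fun e he => ⟨(v e.2, v e.1), ?_, by simp⟩)
  · rw [mem_inversions] at he ⊢
    exact ⟨he.2, by simpa using he.1⟩
  · simp only [Prod.mk.injEq, EmbeddingLike.apply_eq_iff_eq] at h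
    exact Prod.ext h.2 h.1
  · rw [mem_inversions] at he ⊢
    exact ⟨he.2, by simpa using he.1⟩

theorem len_swap_mul (v : Perm (Fin n)) (p q : Fin n) :
    len (swap p q * v) = len (v⁻¹ * swap p q) := by
  rw [← len_inv, mul_inv_rev, swap_inv]

theorem len_swap_mul_lt {v : Perm (Fin n)} {p q : Fin n} (hpq : p < q) (hv : v⁻¹ q < v⁻¹ p) :
    len (swap p q * v) < len v := by
  rw [len_swap_mul, ← len_inv v]
  exact len_mul_swap_lt hpq hv

theorem len_swap_mul_le_of_adjacent (v : Perm (Fin n)) {p q : Fin n} (hpq : (p : ℕ) + 1 = q) :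
    len (swap p q * v) ≤ len v + 1 := by
  rw [len_swap_mul, ← len_inv v]
  exact len_mul_swap_le_of_adjacent v⁻¹ hpq

end Length

theorem Finset.prod_dvd_of_prime {α M : Type*} [CommMonoidWithZero M] [IsCancelMulZero M]
    {s : Finset α} {f : α → M} {x : M} (hprime : ∀ a ∈ s, Prime (f a))
    (hinj : ∀ a ∈ s, ∀ b ∈ s, f a ∣ f b → a = b) (hdvd : ∀ a ∈ s, f a ∣ x) :
    ∏ a ∈ s, f a ∣ x := by
  classical
  induction s using Finset.induction generalizing x with
  | empty => simp
  | insert a s ha ih =>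
    obtain ⟨y, rfl⟩ := hdvd a (mem_insert_self a s)
    rw [prod_insert ha]
    refine mul_dvd_mul_left _ (ih (fun b hb => hprime b (mem_insert_of_mem hb))
      (fun b hb c hc => hinj b (mem_insert_of_mem hb) c (mem_insert_of_mem hc)) fun b hb => ?_)
    have hb' : b ∈ insert a s := mem_insert_of_mem hb
    refine ((hprime b hb').dvd_or_dvd (hdvd b hb')).resolve_left fun hba => ha ?_
    rwa [← hinj b hb' a (mem_insert_self a s) hba]

namespace MvPolynomial

variable {σ R : Type*} [CommRing R]

theorem X_sub_X_dvd_sub_rename_swap [DecidableEq σ] (a b : σ) (f : MvPolynomial σ R) :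
    (X a - X b : MvPolynomial σ R) ∣ f - rename (swap a b) f := by
  rw [← Ideal.mem_span_singleton, ← Ideal.Quotient.eq]
  have : (Ideal.Quotient.mkₐ R (Ideal.span {(X a - X b : MvPolynomial σ R)})).comp
      (rename (swap a b)) = Ideal.Quotient.mkₐ R _ := by
    ext i
    simp only [AlgHom.comp_apply, rename_X, Ideal.Quotient.mkₐ_eq_mk, Ideal.Quotient.eq]
    rw [Ideal.mem_span_singleton, swap_apply_def]
    split_ifs with ha hb
    · exact ⟨-1, by rw [ha]; ring⟩
    · exact ⟨1, by rw [hb]; ring⟩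
    · simp
  exact (congrArg (· f) this).symm

theorem prime_X_sub_X [IsDomain R] {a b : σ} (hab : a ≠ b) :
    Prime (X a - X b : MvPolynomial σ R) := by
  classical
  let e := Equiv.optionSubtypeNe a
  let ψ := (renameEquiv R e.symm).trans (optionEquivLeft R {x : σ // x ≠ a})
  rw [← MulEquiv.prime_iff ψ]
  have h1 : ψ (X a - X b) = Polynomial.X - Polynomial.C (X ⟨b, hab.symm⟩) := by
    simp only [ψ, AlgEquiv.trans_apply, map_sub, renameEquiv_apply, rename_X]
    rw [Equiv.optionSubtypeNe_symm_self, Equiv.optionSubtypeNe_symm_of_ne hab.symm,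
      optionEquivLeft_X_none, optionEquivLeft_X_some]
  exact h1 ▸ Polynomial.prime_X_sub_C _

theorem eq_of_X_sub_X_dvd [LinearOrder σ] [Nontrivial R] {a b c d : σ} (hab : a < b)
    (hcd : c < d) (h : (X c - X d : MvPolynomial σ R) ∣ X a - X b) : c = a ∧ d = b := by
  have key : ∀ e, e ≠ c → e ≠ d → (a = e ↔ b = e) := by
    intro e hc hd
    obtain ⟨g, hg⟩ := h
    have := congrArg (eval (Pi.single e (1 : R))) hg
    simp only [map_sub, map_mul, eval_X, Pi.single_apply] at this
    split_ifs at this <;> simp_all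
  have ha : a = c ∨ a = d := by
    by_contra! h
    exact hab.ne' ((key a h.1 h.2).1 rfl)
  have hb : b = c ∨ b = d := by
    by_contra! h
    exact hab.ne ((key b h.1 h.2).2 rfl)
  rcases ha with rfl | rfl <;> rcases hb with rfl | rfl <;> constructor <;> order

theorem IsHomogeneous.le_of_dvd [IsDomain R] {f g : MvPolynomial σ R} {k D : ℕ}
    (hf : f.IsHomogeneous k) (hg : g.IsHomogeneous D) (hg0 : g ≠ 0) (hfg : f ∣ g) : k ≤ D := by
  have hf0 : f ≠ 0 := by rintro rfl; exact hg0 (zero_dvd_iff.1 hfg)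
  rw [← hf.totalDegree hf0, ← hg.totalDegree hg0]
  exact totalDegree_le_of_dvd_of_isDomain hfg hg0

end MvPolynomial

theorem bruhatLE.len_le {n : ℕ} {w v : Perm (Fin n)} (h : bruhatLE w v) : len w ≤ len v := by
  induction h with
  | refl => exact le_rfl
  | tail _ hstep ih => exact ih.trans hstep.2.le

theorem bruhatLE.eq_of_len_le {n : ℕ} {w v : Perm (Fin n)} (h : bruhatLE w v)
    (hlen : len v ≤ len w) : w = v := by
  rcases Relation.ReflTransGen.cases_tail h with rfl | ⟨u, hwu, huv⟩
  · rfl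
  · exact absurd (((bruhatLE.len_le hwu).trans_lt huv.2).trans_le hlen) (lt_irrefl _)

section GKM

variable {n : ℕ}

theorem pact_pact (u v : Perm (Fin n)) (f : Pol n) : pact u (pact v f) = pact (u * v) f := by
  simp only [pact, rename_rename, Perm.coe_mul]

theorem pact_sub (u : Perm (Fin n)) (f g : Pol n) : pact u (f - g) = pact u f - pact u g :=
  map_sub _ f g

theorem pact_swap_pact_swap (a b : Fin n) (f : Pol n) :
    pact (swap a b) (pact (swap a b) f) = f := by
  rw [pact_pact, swap_mul_self, pact, Perm.coe_one, rename_id_apply]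

theorem Pol.isUnit_two : IsUnit (2 : Pol n) := by
  have h := (isUnit_iff_ne_zero.2 (two_ne_zero : (2 : ℂ) ≠ 0)).map (C : ℂ →+* Pol n)
  rwa [map_ofNat] at h

theorem GKM.sub {p q : Perm (Fin n) → Pol n} (hp : GKM n p) (hq : GKM n q) : GKM n (p - q) :=
  (gkmSubmodule n).sub_mem hp hq

theorem GKM.dvd_sub_swap_mul {p : Perm (Fin n) → Pol n} (hp : GKM n p) {a b : Fin n}
    (hab : a ≠ b) (v : Perm (Fin n)) : (X a - X b : Pol n) ∣ p v - p (swap a b * v) := by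
  rcases hab.lt_or_gt with h | h
  · exact hp v a b h
  · rw [swap_comm, ← neg_sub]
    exact (neg_dvd.2 (hp v b a h))

theorem gkm_starAct {p : Perm (Fin n) → Pol n} (hp : GKM n p) (u : Perm (Fin n)) :
    GKM n (starAct p u) := fun v a b hab => by
  have h := hp (v * u) a b hab
  rwa [← mul_assoc] at h

theorem gkm_dot {p : Perm (Fin n) → Pol n} (hp : GKM n p) (u : Perm (Fin n)) :
    GKM n (dot u p) := fun v a b hab => by
  have h := map_dvd (rename u) (hp.dvd_sub_swap_mul (u⁻¹.injective.ne hab.ne) (u⁻¹ * v))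
  rw [← mul_assoc, ← Equiv.mul_swap_eq_swap_mul, mul_assoc, map_sub, map_sub, rename_X,
    rename_X] at h
  simp only [Perm.coe_inv, apply_symm_apply] at h
  exact h

theorem GKM.len_lt_of_dvd_of_minimal {r : Perm (Fin n) → Pol n} {D : ℕ} (hr : GKM n r)
    (hhom : ∀ v, (r v).IsHomogeneous D) {u : Perm (Fin n)} (hu : r u ≠ 0)
    (hmin : ∀ u', len u' < len u → r u' = 0) {a b : Fin n} (hab : a < b)
    (hab' : u⁻¹ a < u⁻¹ b) (hdvd : (X a - X b : Pol n) ∣ r u) : len u < D := by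
  set S := insert (a, b) (inversions u⁻¹)
  have hab_notMem : (a, b) ∉ inversions u⁻¹ := fun h => (mem_inversions.1 h).2.asymm hab'
  have hsorted : ∀ e ∈ S, e.1 < e.2 := by
    simp only [S, Finset.forall_mem_insert, mem_inversions]
    exact ⟨hab, fun e he => he.1⟩
  have hprod : ∏ e ∈ S, (X e.1 - X e.2 : Pol n) ∣ r u := by
    refine Finset.prod_dvd_of_prime (fun e he => prime_X_sub_X (hsorted e he).ne)
      (fun e he e' he' h => ?_) (fun e he => ?_)
    · obtain ⟨h1, h2⟩ := eq_of_X_sub_X_dvd (hsorted e' he') (hsorted e he) h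
      exact Prod.ext h1 h2
    · rcases Finset.mem_insert.1 he with rfl | he
      · exact hdvd
      · obtain ⟨h1, h2⟩ := mem_inversions.1 he
        have h := hr u e.1 e.2 h1
        rwa [hmin _ (len_swap_mul_lt h1 h2), sub_zero] at h
  have hhomS : (∏ e ∈ S, (X e.1 - X e.2 : Pol n)).IsHomogeneous (len u + 1) := by
    have h := IsHomogeneous.prod S (fun e => (X e.1 - X e.2 : Pol n)) (fun _ => 1)
      (fun e _ => (isHomogeneous_X ℂ e.1).sub (isHomogeneous_X ℂ e.2))
    rwa [Finset.sum_const, smul_eq_mul, mul_one, Finset.card_insert_of_notMem hab_notMem,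
      ← len_eq_card_inversions, len_inv] at h
  exact hhomS.le_of_dvd (hhom u) hu hprod

theorem GKM.eq_zero_of_dvd_of_minimal {r : Perm (Fin n) → Pol n} {D : ℕ} (hr : GKM n r)
    (hhom : ∀ v, (r v).IsHomogeneous D) (hlow : ∀ u, len u < D → r u = 0)
    (hstep : ∀ u, (∀ u', len u' < len u → r u' = 0) →
      r u = 0 ∨ ∃ a b, a < b ∧ u⁻¹ a < u⁻¹ b ∧ (X a - X b : Pol n) ∣ r u)
    (u : Perm (Fin n)) : r u = 0 := by
  induction u using (measure len).wf.induction with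
  | _ u ih =>
  by_contra hu
  obtain hzero | ⟨a, b, hab, hab', hdvd⟩ := hstep u ih
  · exact hu hzero
  · exact hu (hlow u (hr.len_lt_of_dvd_of_minimal hhom hu ih hab hab' hdvd))

theorem GKM.apply_eq_apply_mul_swap {p : Perm (Fin n) → Pol n} {D : ℕ} (hp : GKM n p)
    (hhom : ∀ v, (p v).IsHomogeneous D) {a b : Fin n} (hab : a < b)
    (hlow : ∀ u, len u < D → p u = p (u * swap a b)) (v : Perm (Fin n)) :
    p v = p (v * swap a b) := by
  set r := p - starAct p (swap a b)
  have hr : GKM n r := hp.sub (gkm_starAct hp _)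
  have hanti : ∀ u, r (u * swap a b) = -r u := fun u => by
    simp [r, starAct, mul_assoc]
  refine sub_eq_zero.1 (hr.eq_zero_of_dvd_of_minimal (fun u => (hhom u).sub (hhom _))
    (fun u hu => sub_eq_zero.2 (hlow u hu)) (fun u hmin => ?_) v)
  rcases lt_or_gt_of_ne (u.injective.ne hab.ne) with h | h
  · refine Or.inr ⟨u a, u b, h, by simpa using hab, ?_⟩
    have hdvd := hr u (u a) (u b) h
    rwa [← Equiv.mul_swap_eq_swap_mul, hanti, sub_neg_eq_add, ← two_mul,
      Pol.isUnit_two.dvd_mul_left] at hdvd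
  · refine Or.inl ?_
    rw [← neg_eq_zero, ← hanti, hmin _ (len_mul_swap_lt hab h)]

theorem GKM.pact_swap_apply_eq {p : Perm (Fin n) → Pol n} {D : ℕ} (hp : GKM n p)
    (hhom : ∀ v, (p v).IsHomogeneous D) {a b : Fin n} (hab : a < b)
    (hlow : ∀ u, len u < D → pact (swap a b) (p u) = p (swap a b * u)) (v : Perm (Fin n)) :
    pact (swap a b) (p v) = p (swap a b * v) := by
  set s := swap a b
  set r := p - dot s p
  have hr : GKM n r := hp.sub (gkm_dot hp _)
  have hr_apply : ∀ u, r u = p u - pact s (p (s * u)) := fun u => by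
    simp [r, dot, s, swap_inv]
  have hanti : ∀ u, r (s * u) = -pact s (r u) := fun u => by
    rw [hr_apply, hr_apply, swap_mul_self_mul, pact_sub, pact_swap_pact_swap, neg_sub]
  have hzero : ∀ u, r u = 0 := hr.eq_zero_of_dvd_of_minimal
    (fun u => (hhom u).sub (hhom _).rename_isHomogeneous)
    (fun u hu => by rw [hr_apply, ← hlow u hu, pact_swap_pact_swap, sub_self])
    (fun u hmin => ?_)
  · have h := hr_apply (s * v)
    rwa [hzero, swap_mul_self_mul, eq_comm, sub_eq_zero, eq_comm] at h
  rcases lt_or_gt_of_ne (u⁻¹.injective.ne hab.ne) with h | h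
  · refine Or.inr ⟨a, b, hab, h, ?_⟩
    have hswap : X a - X b ∣ r u - pact s (r u) := X_sub_X_dvd_sub_rename_swap a b (r u)
    have hdvd := dvd_add (hr u a b hab) hswap
    rwa [hanti, sub_neg_eq_add, add_add_sub_cancel, ← two_mul, Pol.isUnit_two.dvd_mul_left] at hdvd
  · have h0 := hmin _ (len_swap_mul_lt hab h)
    rw [hanti, neg_eq_zero] at h0
    rw [← pact_swap_pact_swap a b (r u), h0]
    exact Or.inl (map_zero _)

end GKM

section Canonical

variable {n : ℕ} {w : Perm (Fin n)} {p : Perm (Fin n) → Pol n}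

theorem IsCanonical.apply_eq_zero (hp : IsCanonical w p) {v : Perm (Fin n)} (hlen : len v ≤ len w)
    (hne : v ≠ w) : p v = 0 :=
  hp.2.2.1 v fun h => hne (h.eq_of_len_le hlen).symm

theorem IsCanonical.apply_eq_apply_mul_swap (hp : IsCanonical w p) {a b : Fin n}
    (hab : (a : ℕ) + 1 = b) (hlen : len w < len (w * swap a b)) (v : Perm (Fin n)) :
    p v = p (v * swap a b) := by
  refine hp.1.apply_eq_apply_mul_swap hp.2.1 (Fin.lt_def.2 (by omega)) (fun u hu => ?_) v
  have hne : u * swap a b ≠ w := by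
    rintro rfl
    rw [mul_swap_mul_self] at hlen
    exact hlen.not_gt hu
  rw [hp.apply_eq_zero hu.le (ne_of_apply_ne len hu.ne), hp.apply_eq_zero
    ((len_mul_swap_le_of_adjacent u hab).trans hu) hne]

theorem IsCanonical.pact_swap_apply_eq (hp : IsCanonical w p) {a b : Fin n}
    (hab : (a : ℕ) + 1 = b) (hlen : len w < len (swap a b * w)) (v : Perm (Fin n)) :
    pact (swap a b) (p v) = p (swap a b * v) := by
  refine hp.1.pact_swap_apply_eq hp.2.1 (Fin.lt_def.2 (by omega)) (fun u hu => ?_) v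
  have hne : swap a b * u ≠ w := by
    rintro rfl
    rw [swap_mul_self_mul] at hlen
    exact hlen.not_gt hu
  rw [hp.apply_eq_zero hu.le (ne_of_apply_ne len hu.ne), hp.apply_eq_zero
    ((len_swap_mul_le_of_adjacent u hab).trans hu) hne]
  exact map_zero _

end Canonical

theorem localization_formulas_general (n : ℕ)
    (pw : Perm (Fin n) → Perm (Fin n) → Pol n)
    (hpw : ∀ w, IsCanonical w (pw w))
    (w : Perm (Fin n)) (i : ℕ) (hi : i + 1 < n) :
    (len w < len (w * sT n i hi) → ∀ v, pw w v = pw w (v * sT n i hi)) ∧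
    (len w < len (sT n i hi * w) → ∀ v, pact (sT n i hi) (pw w v) = pw w (sT n i hi * v)) :=
  ⟨(hpw w).apply_eq_apply_mul_swap rfl, (hpw w).pact_swap_apply_eq rfl⟩

/-- localization formulas.  (1) If `ℓ(wsᵢ) > ℓ(w)` then
`p_w(v) = p_w(vsᵢ)` for every `v`.  (2) If `ℓ(sᵢw) > ℓ(w)` then
`sᵢ(p_w(v)) = p_w(sᵢv)` for every `v`. -/
theorem localization_formulas (n : ℕ) (hn : 1 ≤ n)
    (pw : Perm (Fin n) → Perm (Fin n) → Pol n)
    (hpw : ∀ w, IsCanonical w (pw w))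
    (w : Perm (Fin n)) (i : ℕ) (hi : i + 1 < n) :
    (len w < len (w * sT n i hi) → ∀ v, pw w v = pw w (v * sT n i hi)) ∧
    (len w < len (sT n i hi * w) → ∀ v, pact (sT n i hi) (pw w v) = pw w (sT n i hi * v)) :=
  localization_formulas_general n pw hpw w i hi
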